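/- arXiv:1609.04113 — 2 statements merged into one kernel-verified Lean document; each statement's English description precedes it below -/
import Mathlib

section
/- A right R-module M is Rickart (i.e., for every endomorphism φ of M, the kernel of φ is a direct summand of M) if and only if for any two direct summands A and B of M and any R-linear map f : A → B, the kernel of f is a direct summand of A. -/
/-!
For `A ⊕ A' = M` and `f : A → B`, the endomorphism `φ = f ∘ π` of `M` (with `π` the projection
onto `A` along `A'`) has `ker f = ker φ ∩ A` and `A' ≤ ker φ`. By the modular law
`ker φ = (ker φ ∩ A) ⊕ A'`, so a complement `K'` of `ker φ` yields the complement `A' ⊕ K'` of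
`ker φ ∩ A` in `M`, which cuts down to a complement inside `A`. Conversely, an endomorphism of `M`
is a map between the summands `M` and `M`.
-/

/-- `N` is a direct summand of `M`. -/
def IsDirectSummand {R M : Type*} [Ring R] [AddCommGroup M] [Module R M]
    (N : Submodule R M) : Prop := ∃ N' : Submodule R M, IsCompl N N'

/-- `M` is a Rickart module: the kernel of every endomorphism is a direct summand. -/
def IsRickartModule (R M : Type*) [Ring R] [AddCommGroup M] [Module R M] : Prop :=
  ∀ φ : Module.End R M, IsDirectSummand (LinearMap.ker φ)

theorem isCompl_inf_sup_of_isCompl_of_le {α : Type*} [Lattice α] [BoundedOrder α]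
    [IsModularLattice α] {a a' k k' : α} (ha : IsCompl a a') (hk : IsCompl k k') (h : a' ≤ k) :
    IsCompl (k ⊓ a) (a' ⊔ k') := by
  have hsup : k ⊓ a ⊔ a' = k := by
    rw [inf_sup_assoc_of_le a h, ha.sup_eq_top, inf_top_eq]
  exact (ha.disjoint.mono_left inf_le_right).isCompl_sup_right_of_isCompl_sup_left (hsup.symm ▸ hk)

open LinearMap Submodule

namespace IsDirectSummand

variable {R M : Type*} [Ring R] [AddCommGroup M] [Module R M]

theorem top : IsDirectSummand (⊤ : Submodule R M) := ⟨⊥, isCompl_top_bot⟩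

theorem comap_subtype_of_isCompl_of_le {A A' K : Submodule R M} (hA : IsCompl A A')
    (hA'K : A' ≤ K) (hK : IsDirectSummand K) : IsDirectSummand (K.comap A.subtype) := by
  obtain ⟨K', hK⟩ := hK
  have h := isCompl_comap_subtype_of_isCompl_of_le
    (isCompl_inf_sup_of_isCompl_of_le hA hK hA'K) inf_le_right
  rw [comap_inf, comap_subtype_self, inf_top_eq] at h
  exact ⟨_, h⟩

theorem map_subtype {A : Submodule R M} {N : Submodule R A} (hA : IsDirectSummand A)
    (hN : IsDirectSummand N) : IsDirectSummand (N.map A.subtype) := by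
  obtain ⟨A', hA⟩ := hA
  obtain ⟨C, hC⟩ := hN
  refine ⟨C.map A.subtype ⊔ A',
    (disjoint_map A.injective_subtype hC.disjoint).isCompl_sup_right_of_isCompl_sup_left ?_⟩
  rwa [← Submodule.map_sup, hC.sup_eq_top, map_subtype_top]

end IsDirectSummand

theorem ker_eq_comap_ker_comp_projectionOnto {R M N : Type*} [Ring R] [AddCommGroup M]
    [Module R M] [AddCommGroup N] [Module R N] {A A' : Submodule R M} (hA : IsCompl A A')
    (g : A →ₗ[R] N) : ker g = (ker (g ∘ₗ A.projectionOnto A' hA)).comap A.subtype := by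
  rw [← ker_comp, comp_assoc, projectionOnto_comp_subtype, comp_id]

theorem IsRickartModule.isDirectSummand_ker_of_isCompl {R M : Type*} [Ring R] [AddCommGroup M]
    [Module R M] (hM : IsRickartModule R M) {A A' : Submodule R M} (hA : IsCompl A A')
    (g : A →ₗ[R] M) : IsDirectSummand (ker g) := by
  rw [ker_eq_comap_ker_comp_projectionOnto hA]
  exact .comap_subtype_of_isCompl_of_le hA
    ((ker_projectionOnto hA).ge.trans (ker_le_ker_comp _ _)) (hM _)

theorem rickart_iff_ker_summand_between_summands
    {R M : Type*} [Ring R] [AddCommGroup M] [Module R M] :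
    IsRickartModule R M ↔
      ∀ (A B : Submodule R M), IsDirectSummand A → IsDirectSummand B →
        ∀ f : A →ₗ[R] B, IsDirectSummand (LinearMap.ker f) := by
  constructor
  · rintro hM A B ⟨A', hA⟩ - f
    rw [← ker_comp_of_ker_eq_bot f (ker_subtype B)]
    exact hM.isDirectSummand_ker_of_isCompl hA _
  · intro h φ
    have hres := h ⊤ ⊤ .top .top (φ.restrict fun _ _ => mem_top)
    have hφ := IsDirectSummand.top.map_subtype hres
    rwa [ker_restrict, map_comap_subtype, top_inf_eq] at hφ
end

section
/- A ring R is right nonsingular if and only if for every subset X of R, the right annihilator r_R(X) is a closed right ideal of R (i.e., r_R(X) has no proper essential extension within R_R). -/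
/-- The right annihilator of a set `X ⊆ R`, as a right ideal (a submodule of `R`
over the opposite ring `Rᵐᵒᵖ`). -/
def rightAnnSet (R : Type*) [Ring R] (X : Set R) : Submodule Rᵐᵒᵖ R where
  carrier := {a : R | ∀ x ∈ X, x * a = 0}
  add_mem' := by
    intro a b ha hb x hx
    rw [mul_add, ha x hx, hb x hx, add_zero]
  zero_mem' := by simp
  smul_mem' := by
    intro c a ha x hx
    rw [MulOpposite.smul_eq_mul_unop, ← mul_assoc, ha x hx, zero_mul]

/-- `I` is an essential submodule of `J` (for right ideals of `R`). -/
def IsEssentialIn {R : Type*} [Ring R] (I J : Submodule Rᵐᵒᵖ R) : Prop :=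
  I ≤ J ∧ ∀ K : Submodule Rᵐᵒᵖ R, K ≤ J → K ≠ ⊥ → I ⊓ K ≠ ⊥

/-- A right ideal is closed in `R` if it has no proper essential extension. -/
def IsClosedRightIdeal {R : Type*} [Ring R] (I : Submodule Rᵐᵒᵖ R) : Prop :=
  ∀ J : Submodule Rᵐᵒᵖ R, IsEssentialIn I J → I = J

/-!
If `r(X)` is essential in `J` and `b ∈ J`, then its preimage `{r : b r ∈ r(X)}` under left
multiplication by `b` is essential in `R`; for `x ∈ X` this preimage lies in `r(x b)`, so
nonsingularity gives `x b = 0`, i.e. `J ≤ r(X)`. Conversely, if all annihilators are closed, an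
essential `r(a)` must be all of `R`, so `a = a * 1 = 0`.
-/

section RightAnnSet

variable {R : Type*} [Ring R]

theorem mem_rightAnnSet_singleton {x a : R} : a ∈ rightAnnSet R {x} ↔ x * a = 0 := by
  simp [rightAnnSet]

theorem rightAnnSet_anti {X Y : Set R} (hXY : X ⊆ Y) : rightAnnSet R Y ≤ rightAnnSet R X :=
  fun _ ha x hx => ha x (hXY hx)

theorem rightAnnSet_singleton_mul (x b : R) :
    rightAnnSet R {x * b} = (rightAnnSet R {x}).comap (LinearMap.mulLeft Rᵐᵒᵖ b) := by
  ext a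
  simp only [Submodule.mem_comap, LinearMap.mulLeft_apply, mem_rightAnnSet_singleton, mul_assoc]

end RightAnnSet

namespace IsEssentialIn

variable {R : Type*} [Ring R] {I J : Submodule Rᵐᵒᵖ R}

theorem mono_left {I' : Submodule Rᵐᵒᵖ R} (h : IsEssentialIn I J) (hII' : I ≤ I')
    (hI'J : I' ≤ J) : IsEssentialIn I' J :=
  ⟨hI'J, fun K hKJ hK => ne_bot_of_le_ne_bot (h.2 K hKJ hK) (inf_le_inf_right K hII')⟩

theorem comap (h : IsEssentialIn I J) (f : R →ₗ[Rᵐᵒᵖ] R) :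
    IsEssentialIn (I.comap f) (J.comap f) := by
  refine ⟨Submodule.comap_mono h.1, fun K hKJ hK => ?_⟩
  by_cases hKker : K ≤ LinearMap.ker f
  · have hKI : K ≤ I.comap f := hKker.trans (LinearMap.ker_le_comap f)
    rwa [inf_eq_right.mpr hKI]
  -- Otherwise `f` keeps part of `K` alive, and that part meets `I` inside `J`.
  have hfK : K.map f ≠ ⊥ := fun hbot => hKker (LinearMap.le_ker_iff_map.mpr hbot)
  obtain ⟨y, hy, hy0⟩ :=
    Submodule.ne_bot_iff _ |>.mp (h.2 _ (Submodule.map_le_iff_le_comap.mpr hKJ) hfK)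
  obtain ⟨hyI, k, hkK, rfl⟩ := Submodule.mem_inf.mp hy
  refine Submodule.ne_bot_iff _ |>.mpr ⟨k, Submodule.mem_inf.mpr ⟨hyI, hkK⟩, ?_⟩
  rintro rfl
  exact hy0 (map_zero f)

theorem comap_mulLeft_top (h : IsEssentialIn I J) {b : R} (hb : b ∈ J) :
    IsEssentialIn (I.comap (LinearMap.mulLeft Rᵐᵒᵖ b)) ⊤ := by
  have hJ : J.comap (LinearMap.mulLeft Rᵐᵒᵖ b) = ⊤ :=
    Submodule.eq_top_iff'.mpr fun r => by
      simpa [MulOpposite.smul_eq_mul_unop] using J.smul_mem (MulOpposite.op r) hb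
  simpa only [hJ] using h.comap (LinearMap.mulLeft Rᵐᵒᵖ b)

end IsEssentialIn

theorem isEssentialIn_rightAnnSet_singleton_mul {R : Type*} [Ring R] {X : Set R}
    {J : Submodule Rᵐᵒᵖ R} (h : IsEssentialIn (rightAnnSet R X) J) {x b : R} (hx : x ∈ X)
    (hb : b ∈ J) : IsEssentialIn (rightAnnSet R {x * b}) ⊤ := by
  refine (h.comap_mulLeft_top hb).mono_left ?_ le_top
  rw [rightAnnSet_singleton_mul]
  exact Submodule.comap_mono (rightAnnSet_anti (Set.singleton_subset_iff.mpr hx))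

theorem rightNonsingular_iff_rightAnn_closed {R : Type*} [Ring R] :
    (∀ a : R, IsEssentialIn (rightAnnSet R {a}) ⊤ → a = 0) ↔
      ∀ X : Set R, IsClosedRightIdeal (rightAnnSet R X) := by
  constructor
  · intro hns X J hess
    refine le_antisymm hess.1 fun b hb x hx => ?_
    exact hns (x * b) (isEssentialIn_rightAnnSet_singleton_mul hess hx hb)
  · intro hclosed a hess
    have h1 : (1 : R) ∈ rightAnnSet R {a} := hclosed {a} ⊤ hess ▸ Submodule.mem_top
    simpa using mem_rightAnnSet_singleton.mp h1
end
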